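/- Let ℓ be a real quadratic algebraic irrational number (root of a degree-2 integer polynomial) with ℓ/π irrational, and suppose inf_{j≥1} j|sin(jℓ)| ≥ γ > 0. Let n ∈ ℕ*, α = nℓ, β = (n+1)ℓ, and J_k as in the explicit formula J_k = (2π/(β-α)²) sin(k(β+α)) sin(k(β-α)) / ((2k+2π/(β-α))(2k-2π/(β-α))). Then there exists C > 0 such that |J_k| ≥ C/k⁴ for all k ∈ ℕ*. -/

import Mathlib

open Real

set_option maxHeartbeats 1000000 in
/-- If `ℓ` is a quadratic algebraic irrational with `ℓ/π` irrational satisfying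
`inf_{j≥1} j|sin(jℓ)| ≥ γ > 0`, and `α = nℓ`, `β = (n+1)ℓ`, then the quantity
`J_k = (2π/(β-α)²) sin(k(β+α)) sin(k(β-α)) / ((2k+2π/(β-α))(2k-2π/(β-α)))`
satisfies `|J_k| ≥ C/k⁴` for some `C > 0` and all `k ≥ 1`. -/
theorem stmt4 (ℓ : ℝ) (hirr : Irrational ℓ)
    (halg : ∃ P : Polynomial ℤ, P.degree = 2 ∧ Polynomial.aeval ℓ P = 0)
    (hπ : Irrational (ℓ / π))
    (γ : ℝ) (hγ : 0 < γ) (hsin : ∀ j : ℕ, 1 ≤ j → γ ≤ (j : ℝ) * |Real.sin (j * ℓ)|)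
    (n : ℕ) (hn : 1 ≤ n) :
    ∃ C > 0, ∀ k : ℕ, 1 ≤ k →
      C / (k : ℝ) ^ 4 ≤
        |(2 * π / (((n + 1 : ℕ) : ℝ) * ℓ - (n : ℝ) * ℓ) ^ 2) *
            Real.sin ((k : ℝ) * (((n + 1 : ℕ) : ℝ) * ℓ + (n : ℝ) * ℓ)) *
            Real.sin ((k : ℝ) * (((n + 1 : ℕ) : ℝ) * ℓ - (n : ℝ) * ℓ)) /
          ((2 * k + 2 * π / (((n + 1 : ℕ) : ℝ) * ℓ - (n : ℝ) * ℓ)) *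
            (2 * k - 2 * π / (((n + 1 : ℕ) : ℝ) * ℓ - (n : ℝ) * ℓ)))| := by
  have hℓ : ℓ ≠ 0 := hirr.ne_zero
  have hℓ2 : (0:ℝ) < ℓ^2 := by positivity
  have hπ0 : (0:ℝ) < π := Real.pi_pos
  set R : ℝ := 4 + 4*π^2/ℓ^2 with hR
  have hR0 : 0 < R := by positivity
  refine ⟨2*π*γ^2 / (ℓ^2 * (2*n+1) * R), by positivity, ?_⟩
  intro k hk
  have hk0 : (0:ℝ) < k := by exact_mod_cast hk
  have hk1 : (1:ℝ) ≤ k := by exact_mod_cast hk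
  have hsimp1 : ((n + 1 : ℕ) : ℝ) * ℓ - (n : ℝ) * ℓ = ℓ := by push_cast; ring
  have hsimp2 : ((n + 1 : ℕ) : ℝ) * ℓ + (n : ℝ) * ℓ = (2*(n:ℝ)+1) * ℓ := by push_cast; ring
  rw [hsimp1, hsimp2]
  have h2 : γ / k ≤ |Real.sin (k * ℓ)| := by
    rw [div_le_iff₀ hk0]
    have := hsin k hk
    linarith [this]
  have h1 : γ / (k * (2*(n:ℝ)+1)) ≤ |Real.sin ((k:ℝ) * ((2*(n:ℝ)+1) * ℓ))| := by
    have hj : 1 ≤ k * (2*n+1) := Nat.one_le_iff_ne_zero.mpr (by positivity)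
    have h := hsin (k*(2*n+1)) hj
    have hc : ((k*(2*n+1):ℕ):ℝ) = (k:ℝ)*(2*(n:ℝ)+1) := by push_cast; ring
    rw [hc] at h
    have harg : (k:ℝ)*(2*(n:ℝ)+1) * ℓ = (k:ℝ) * ((2*(n:ℝ)+1) * ℓ) := by ring
    rw [harg] at h
    rw [div_le_iff₀ (by positivity)]
    linarith [h]
  have hs2pos : 0 < |Real.sin (k * ℓ)| := lt_of_lt_of_le (by positivity) h2
  -- denominator
  set D : ℝ := (2 * (k:ℝ) + 2 * π / ℓ) * (2 * (k:ℝ) - 2 * π / ℓ) with hD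
  have hDne : D ≠ 0 := by
    rw [hD]
    apply mul_ne_zero
    · intro h
      have : (k:ℝ) * ℓ = -π := by field_simp at h; nlinarith [h]
      have : Real.sin ((k:ℝ) * ℓ) = 0 := by rw [this]; simp
      rw [this] at hs2pos; simp at hs2pos
    · intro h
      have : (k:ℝ) * ℓ = π := by field_simp at h; nlinarith [h]
      have : Real.sin ((k:ℝ) * ℓ) = 0 := by rw [this]; simp
      rw [this] at hs2pos; simp at hs2pos
  have hDpos : 0 < |D| := abs_pos.mpr hDne
  have hDle : |D| ≤ R * (k:ℝ)^2 := by
    have hDval : D = 4*(k:ℝ)^2 - 4*π^2/ℓ^2 := by rw [hD]; field_simp; ring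
    rw [hDval]
    rw [abs_le, hR]
    have ht : (0:ℝ) ≤ 4*π^2/ℓ^2 := by positivity
    have hk2 : (1:ℝ) ≤ (k:ℝ)^2 := by nlinarith
    have hm : 0 ≤ (4*π^2/ℓ^2) * ((k:ℝ)^2 - 1) := mul_nonneg ht (by linarith)
    constructor
    · nlinarith [hm, hk2]
    · nlinarith [hm, hk2, ht]
  have hA : (0:ℝ) < 2 * π / ℓ^2 := by positivity
  rw [abs_div, abs_mul, abs_mul, abs_of_pos hA]
  have key : 2*π*γ^2 / (ℓ^2 * (2*(n:ℕ)+1) * R) / (k:ℝ)^4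
      = (2*π/ℓ^2 * (γ/((k:ℝ)*(2*(n:ℝ)+1))) * (γ/(k:ℝ))) / (R * (k:ℝ)^2) := by
    have hkne : (k:ℝ) ≠ 0 := ne_of_gt hk0
    have h2n : (2*(n:ℝ)+1) ≠ 0 := by positivity
    have hRne : R ≠ 0 := ne_of_gt hR0
    have hℓ2ne : ℓ^2 ≠ 0 := ne_of_gt hℓ2
    push_cast
    field_simp
  rw [key]
  gcongr
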